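/- arXiv:1701.00770 — 3 statements merged into one kernel-verified Lean document; each statement's English description precedes it below -/
import Mathlib

section
/- Let (X_j)_{j∈ℤ} and (X_j^{(m)})_{j∈ℤ, m∈ℕ} be H-valued random elements with E[‖X_j‖⁴] < ∞ and E[‖X_j − X_j^{(m)}‖⁴] < ∞ for all j, m, satisfying: (a) monotonicity of approximation: for all j and all m ≤ m′, E[‖X_j − X_j^{(m′)}‖⁴] ≤ E[‖X_j − X_j^{(m)}‖⁴]; (b) stationarity of approximation errors: for all j and m, E[‖X_j − X_j^{(m)}‖⁴] = E[‖X_0 − X_0^{(m)}‖⁴]; and (c) Σ_{m=0}^∞ (E[‖X_0 − X_0^{(m)}‖⁴])^{1/4} < ∞. Then for every k ≥ 1, Σ_{m=k}^∞ ( E[ ‖X_m(k) − Y_m(k)‖⁴ ] )^{1/4} ≤ k^{1/2} · Σ_{m=0}^∞ ( E[‖X_0 − X_0^{(m)}‖⁴] )^{1/4} < ∞, where Y_m(k) := (X_m^{(m)}, X_{m−1}^{(m−1)}, …, X_{m−k+1}^{(m−k+1)}) ∈ H^k. In particular, the stacked sequence (X_j(k)) is L⁴-m-approximable whenever (X_j)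 is. -/
open MeasureTheory

set_option maxHeartbeats 1000000

/-- The stacked difference `X_{m+k}(k) − Y_{m+k}(k) ∈ H^k`, where
`Y_j(k) = (X_j^{(j)}, X_{j-1}^{(j-1)}, …, X_{j-k+1}^{(j-k+1)})` is built from the
`m`-dependent couplings `Xm`. -/
noncomputable def stackApproxDiff {H : Type*} [NormedAddCommGroup H] [InnerProductSpace ℝ H]
    (X : ℤ → H) (Xm : ℤ → ℕ → H) (k m : ℕ) : PiLp 2 (fun _ : Fin k => H) :=
  (WithLp.equiv 2 (∀ _ : Fin k, H)).symm
    (fun i => X (((m + k : ℕ) : ℤ) - (i : ℕ)) -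
      Xm (((m + k : ℕ) : ℤ) - (i : ℕ)) (m + k - (i : ℕ)))

/-- If the array `(X_j, X_j^{(m)})` satisfies monotonicity of the fourth-moment
approximation errors, stationarity of these errors, and summability of their fourth roots, then
for every `k ≥ 1` the stacked approximation errors satisfy
`Σ_{m=k}^∞ (E‖X_m(k) − Y_m(k)‖⁴)^{1/4} ≤ √k · Σ_{m=0}^∞ (E‖X_0 − X_0^{(m)}‖⁴)^{1/4} < ∞`;
in particular the stacked sequence is `L⁴`-`m`-approximable. -/
theorem stacked_L4_m_approximable
    {H : Type*} [NormedAddCommGroup H] [InnerProductSpace ℝ H]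
    {Ω : Type*} [MeasurableSpace Ω] (μ : Measure Ω) [IsProbabilityMeasure μ]
    (X : ℤ → Ω → H) (Xm : ℤ → ℕ → Ω → H)
    (hX4 : ∀ j : ℤ, Integrable (fun ω => ‖X j ω‖ ^ 4) μ)
    (hXm4 : ∀ j : ℤ, ∀ m : ℕ, Integrable (fun ω => ‖X j ω - Xm j m ω‖ ^ 4) μ)
    (hmono : ∀ j : ℤ, ∀ m m' : ℕ, m ≤ m' →
      ∫ ω, ‖X j ω - Xm j m' ω‖ ^ 4 ∂μ ≤ ∫ ω, ‖X j ω - Xm j m ω‖ ^ 4 ∂μ)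
    (hstat : ∀ j : ℤ, ∀ m : ℕ,
      ∫ ω, ‖X j ω - Xm j m ω‖ ^ 4 ∂μ = ∫ ω, ‖X 0 ω - Xm 0 m ω‖ ^ 4 ∂μ)
    (hsum : Summable fun m : ℕ => (∫ ω, ‖X 0 ω - Xm 0 m ω‖ ^ 4 ∂μ) ^ ((1 : ℝ) / 4)) :
    ∀ k : ℕ, 1 ≤ k →
      Summable (fun m : ℕ =>
        (∫ ω, ‖stackApproxDiff (fun t => X t ω) (fun t l => Xm t l ω) k m‖ ^ 4 ∂μ)
          ^ ((1 : ℝ) / 4)) ∧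
      (∑' m : ℕ,
          (∫ ω, ‖stackApproxDiff (fun t => X t ω) (fun t l => Xm t l ω) k m‖ ^ 4 ∂μ)
            ^ ((1 : ℝ) / 4))
        ≤ (k : ℝ) ^ ((1 : ℝ) / 2) *
            ∑' m : ℕ, (∫ ω, ‖X 0 ω - Xm 0 m ω‖ ^ 4 ∂μ) ^ ((1 : ℝ) / 4) := by
  intro k hk
  set a : ℕ → ℝ := fun m => ∫ ω, ‖X 0 ω - Xm 0 m ω‖ ^ 4 ∂μ with ha
  have ha_nonneg : ∀ m, 0 ≤ a m := fun m =>
    integral_nonneg fun ω => by positivity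
  have hk0 : (0:ℝ) ≤ (k:ℝ) := Nat.cast_nonneg k
  have key : ∀ m : ℕ,
      ∫ ω, ‖stackApproxDiff (fun t => X t ω) (fun t l => Xm t l ω) k m‖ ^ 4 ∂μ
        ≤ (k:ℝ)^2 * a (m+1) := by
    intro m
    set v : Fin k → Ω → H := fun i ω =>
      X (((m + k : ℕ) : ℤ) - (i:ℕ)) ω - Xm (((m + k : ℕ) : ℤ) - (i:ℕ)) (m + k - (i:ℕ)) ω
      with hv
    have hpt : ∀ ω, ‖stackApproxDiff (fun t => X t ω) (fun t l => Xm t l ω) k m‖ ^ 4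
        ≤ (k:ℝ) * ∑ i : Fin k, ‖v i ω‖ ^ 4 := by
      intro ω
      have h2 : ‖stackApproxDiff (fun t => X t ω) (fun t l => Xm t l ω) k m‖ ^ 2
          = ∑ i : Fin k, ‖v i ω‖ ^ 2 := by
        rw [PiLp.norm_sq_eq_of_L2]
        rfl
      calc ‖stackApproxDiff (fun t => X t ω) (fun t l => Xm t l ω) k m‖ ^ 4
          = (‖stackApproxDiff (fun t => X t ω) (fun t l => Xm t l ω) k m‖ ^ 2) ^ 2 := by ring
        _ = (∑ i : Fin k, ‖v i ω‖ ^ 2) ^ 2 := by rw [h2]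
        _ ≤ (Finset.univ : Finset (Fin k)).card * ∑ i : Fin k, (‖v i ω‖ ^ 2) ^ 2 :=
            sq_sum_le_card_mul_sum_sq
        _ = (k:ℝ) * ∑ i : Fin k, ‖v i ω‖ ^ 4 := by
            simp only [Finset.card_univ, Fintype.card_fin]
            congr 1
            exact Finset.sum_congr rfl fun i _ => by ring
    have hRHSint : Integrable (fun ω => (k:ℝ) * ∑ i : Fin k, ‖v i ω‖ ^ 4) μ :=
      (integrable_finset_sum _ (fun i _ => hXm4 _ _)).const_mul _
    have h1 : ∫ ω, ‖stackApproxDiff (fun t => X t ω) (fun t l => Xm t l ω) k m‖ ^ 4 ∂μ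
        ≤ ∫ ω, (k:ℝ) * ∑ i : Fin k, ‖v i ω‖ ^ 4 ∂μ :=
      integral_mono_of_nonneg (ae_of_all _ fun ω => by positivity) hRHSint
        (ae_of_all _ hpt)
    have h2 : ∫ ω, (k:ℝ) * ∑ i : Fin k, ‖v i ω‖ ^ 4 ∂μ
        = (k:ℝ) * ∑ i : Fin k, ∫ ω, ‖v i ω‖ ^ 4 ∂μ := by
      rw [integral_const_mul, integral_finset_sum _ (fun i _ => hXm4 _ _)]
    have h3 : ∀ i : Fin k, ∫ ω, ‖v i ω‖ ^ 4 ∂μ ≤ a (m+1) := by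
      intro i
      have := hstat (((m + k : ℕ) : ℤ) - (i:ℕ)) (m + k - (i:ℕ))
      rw [hv]
      simp only
      rw [this]
      exact hmono 0 (m+1) (m + k - (i:ℕ)) (by omega)
    calc ∫ ω, ‖stackApproxDiff (fun t => X t ω) (fun t l => Xm t l ω) k m‖ ^ 4 ∂μ
        ≤ (k:ℝ) * ∑ i : Fin k, ∫ ω, ‖v i ω‖ ^ 4 ∂μ := h2 ▸ h1
      _ ≤ (k:ℝ) * ∑ _i : Fin k, a (m+1) := by
          apply mul_le_mul_of_nonneg_left (Finset.sum_le_sum fun i _ => h3 i) hk0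
      _ = (k:ℝ)^2 * a (m+1) := by
          simp [Finset.sum_const, Finset.card_univ]
          ring
  set b : ℕ → ℝ := fun m =>
    (∫ ω, ‖stackApproxDiff (fun t => X t ω) (fun t l => Xm t l ω) k m‖ ^ 4 ∂μ)
      ^ ((1:ℝ)/4) with hb
  have hb_nonneg : ∀ m, 0 ≤ b m := fun m => Real.rpow_nonneg
    (integral_nonneg fun ω => by positivity) _
  have hbd : ∀ m, b m ≤ (k:ℝ) ^ ((1:ℝ)/2) * a (m+1) ^ ((1:ℝ)/4) := by
    intro m
    have h1 : b m ≤ ((k:ℝ)^2 * a (m+1)) ^ ((1:ℝ)/4) :=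
      Real.rpow_le_rpow (integral_nonneg fun ω => by positivity) (key m) (by norm_num)
    have h2 : ((k:ℝ)^2 * a (m+1)) ^ ((1:ℝ)/4)
        = (k:ℝ) ^ ((1:ℝ)/2) * a (m+1) ^ ((1:ℝ)/4) := by
      rw [Real.mul_rpow (by positivity) (ha_nonneg _)]
      congr 1
      rw [← Real.rpow_natCast (k:ℝ) 2, ← Real.rpow_mul hk0]
      norm_num
    linarith [h1, h2.le, h2.ge]
  have hsum' : Summable (fun m : ℕ => a (m+1) ^ ((1:ℝ)/4)) :=
    (summable_nat_add_iff 1).mpr hsum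
  have hg : Summable (fun m : ℕ => (k:ℝ) ^ ((1:ℝ)/2) * a (m+1) ^ ((1:ℝ)/4)) :=
    hsum'.mul_left _
  have hbsum : Summable b := Summable.of_nonneg_of_le hb_nonneg hbd hg
  refine ⟨hbsum, ?_⟩
  have h4 : ∑' m, b m ≤ ∑' m, (k:ℝ) ^ ((1:ℝ)/2) * a (m+1) ^ ((1:ℝ)/4) :=
    Summable.tsum_le_tsum hbd hbsum hg
  have h5 : ∑' m, (k:ℝ) ^ ((1:ℝ)/2) * a (m+1) ^ ((1:ℝ)/4)
      = (k:ℝ) ^ ((1:ℝ)/2) * ∑' m, a (m+1) ^ ((1:ℝ)/4) := tsum_mul_left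
  have h6 : ∑' m, a (m+1) ^ ((1:ℝ)/4) ≤ ∑' m, a m ^ ((1:ℝ)/4) := by
    have := Summable.tsum_eq_zero_add hsum
    have h0 : 0 ≤ a 0 ^ ((1:ℝ)/4) := Real.rpow_nonneg (ha_nonneg 0) _
    linarith [this]
  calc ∑' m, b m ≤ (k:ℝ) ^ ((1:ℝ)/2) * ∑' m, a (m+1) ^ ((1:ℝ)/4) := h5 ▸ h4
    _ ≤ (k:ℝ) ^ ((1:ℝ)/2) * ∑' m, a m ^ ((1:ℝ)/4) :=
        mul_le_mul_of_nonneg_left h6 (Real.rpow_nonneg hk0 _)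
end

section
/- Let (X_j)_{j∈ℤ} be identically distributed zero-mean H-valued random elements with E[‖X_0‖²] < ∞, whose common covariance operator C_X(y) = E[⟨X_0, y⟩ X_0] admits an orthonormal basis of eigenfunctions (ν_i)_{i∈ℕ} of H with C_X ν_i = λ_i ν_i. For d ∈ ℕ let P_d denote the orthogonal projection of H onto span(ν_1,…,ν_d). Let (π_ℓ)_{ℓ≥1} be bounded linear operators on H with Σ_{ℓ=1}^∞ ‖π_ℓ‖_L < ∞, let k ≥ 1 and d_1, …, d_k ∈ ℕ, and assume the series Σ_{ℓ>k} π_ℓ X_{1−ℓ} converges in L²_H. Then E[ ‖ Σ_{ℓ>k} π_ℓ X_{1−ℓ} + Σ_{ℓ=1}^k π_ℓ (I − P_{d_{k+1−ℓ}}) X_{1−ℓ} ‖² ] ≤ 2 (Σ_{ℓ>k} ‖π_ℓ‖_L)² · E[‖X_0‖²] + 2 (Σ_{ℓ=1}^k ‖π_ℓ‖_L) · ( Σ_{ℓ=1}^k ‖π_ℓ‖_L Σ_{i > d_{k+1−ℓ}} λ_i ). -/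
/-!
Split the residual as `S + T`, with `S` the tail series and `T` the truncated head, and use
`‖S + T‖² ≤ 2‖S‖² + 2‖T‖²`. For finite sums, the triangle inequality and Cauchy–Schwarz with
weights `‖π_ℓ‖` give `‖Σ π_ℓ y_ℓ‖² ≤ (Σ ‖π_ℓ‖)(Σ ‖π_ℓ‖ ‖y_ℓ‖²)`. Taking expectations bounds every
partial sum of `S` by `(Σ_{ℓ>k} ‖π_ℓ‖)² E‖X_0‖²` (the `X_j` are identically distributed), and
Fatou's lemma passes the bound to `S`. For `T` take `y_ℓ = (I - P_d) X_{1-ℓ}`: by Parseval in the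
eigenbasis, `E‖(I - P_d) X‖² = Σ_{i ≥ d} E⟨ν_i, X⟩²`, and `E⟨ν_i, X⟩² = ⟨ν_i, C_X ν_i⟩ = λ_i`.
-/

open MeasureTheory
open scoped InnerProductSpace

/-- Orthogonal projection onto the span of the first `d` members of an orthonormal family:
`P_d x = Σ_{i<d} ⟨ν_i, x⟩ ν_i`. -/
noncomputable def projSpan {H : Type*} [NormedAddCommGroup H] [InnerProductSpace ℝ H]
    (ν : ℕ → H) (d : ℕ) (x : H) : H :=
  ∑ i ∈ Finset.range d, ⟪ν i, x⟫_ℝ • ν i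

open Filter ProbabilityTheory
open scoped ENNReal

section Projection

variable {H : Type*} [NormedAddCommGroup H] [InnerProductSpace ℝ H]

theorem continuous_projSpan (ν : ℕ → H) (D : ℕ) : Continuous (projSpan ν D) := by
  unfold projSpan
  fun_prop

theorem projSpan_zero (ν : ℕ → H) (x : H) : projSpan ν 0 x = 0 := by
  simp [projSpan]

theorem inner_sub_projSpan {ν : ℕ → H} (hν : Orthonormal ℝ ν) (D : ℕ) (x : H) (i : ℕ) :
    ⟪ν i, x - projSpan ν D x⟫_ℝ = if i < D then 0 else ⟪ν i, x⟫_ℝ := by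
  simp only [projSpan, inner_sub_right, inner_sum, real_inner_smul_right,
    orthonormal_iff_ite.mp hν, mul_ite, mul_one, mul_zero, Finset.sum_ite_eq, Finset.mem_range]
  split_ifs <;> simp

theorem hasSum_inner_sq_norm_sub_projSpan [CompleteSpace H] {ν : ℕ → H} (hν : Orthonormal ℝ ν)
    (hcomp : (Submodule.span ℝ (Set.range ν)).topologicalClosure = ⊤) (D : ℕ) (x : H) :
    HasSum (fun i => ⟪ν (D + i), x⟫_ℝ ^ 2) (‖x - projSpan ν D x‖ ^ 2) := by
  set y := x - projSpan ν D x
  have hparseval : HasSum (fun i => ⟪ν i, y⟫_ℝ ^ 2) (‖y‖ ^ 2) := by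
    simpa [HilbertBasis.coe_mk, real_inner_comm y, sq, real_inner_self_eq_norm_sq] using
      (HilbertBasis.mk hν hcomp.ge).hasSum_inner_mul_inner y y
  have hhead : ∑ i ∈ Finset.range D, ⟪ν i, y⟫_ℝ ^ 2 = 0 :=
    Finset.sum_eq_zero fun i hi => by simp [y, inner_sub_projSpan hν, Finset.mem_range.mp hi]
  have htail := (hasSum_nat_add_iff' D).2 hparseval
  rw [hhead, sub_zero] at htail
  refine htail.congr_fun fun i => ?_
  simp [y, inner_sub_projSpan hν, add_comm]

end Projection

section SecondMoments

variable {𝕜 E F : Type*} [NontriviallyNormedField 𝕜] [NormedAddCommGroup E] [NormedSpace 𝕜 E]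
  [NormedAddCommGroup F] [NormedSpace 𝕜 F] {Ω : Type*} [MeasurableSpace Ω] {μ : Measure Ω}

theorem norm_sum_apply_sq_le {ι : Type*} (s : Finset ι) (T : ι → E →L[𝕜] F) (y : ι → E) :
    ‖∑ ℓ ∈ s, T ℓ (y ℓ)‖ ^ 2 ≤ (∑ ℓ ∈ s, ‖T ℓ‖) * ∑ ℓ ∈ s, ‖T ℓ‖ * ‖y ℓ‖ ^ 2 :=
  calc ‖∑ ℓ ∈ s, T ℓ (y ℓ)‖ ^ 2 ≤ (∑ ℓ ∈ s, ‖T ℓ‖ * ‖y ℓ‖) ^ 2 := by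
        gcongr
        exact (norm_sum_le _ _).trans (Finset.sum_le_sum fun ℓ _ => (T ℓ).le_opNorm _)
    _ ≤ _ := Finset.sum_sq_le_sum_mul_sum_of_sq_le_mul s (fun ℓ _ => norm_nonneg _)
        (fun ℓ _ => by positivity) fun ℓ _ => le_of_eq (by ring)

theorem lintegral_norm_sum_apply_sq_le [MeasurableSpace E] [OpensMeasurableSpace E] {ι : Type*}
    (s : Finset ι) (T : ι → E →L[𝕜] F) {Y : ι → Ω → E} (hY : ∀ ℓ ∈ s, AEMeasurable (Y ℓ) μ)
    {M : ι → ℝ} (hM : ∀ ℓ ∈ s, ∫⁻ ω, ENNReal.ofReal (‖Y ℓ ω‖ ^ 2) ∂μ ≤ ENNReal.ofReal (M ℓ))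
    (hM₀ : ∀ ℓ ∈ s, 0 ≤ M ℓ) :
    ∫⁻ ω, ENNReal.ofReal (‖∑ ℓ ∈ s, T ℓ (Y ℓ ω)‖ ^ 2) ∂μ ≤
      ENNReal.ofReal ((∑ ℓ ∈ s, ‖T ℓ‖) * ∑ ℓ ∈ s, ‖T ℓ‖ * M ℓ) := by
  have hY2 : ∀ ℓ ∈ s, AEMeasurable (fun ω => ENNReal.ofReal (‖Y ℓ ω‖ ^ 2)) μ :=
    fun ℓ hℓ => ((hY ℓ hℓ).norm.pow_const 2).ennreal_ofReal
  have hsplit : ∀ (c : ι → ℝ), (∀ ℓ ∈ s, 0 ≤ c ℓ) →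
      ENNReal.ofReal ((∑ ℓ ∈ s, ‖T ℓ‖) * ∑ ℓ ∈ s, ‖T ℓ‖ * c ℓ) =
        ENNReal.ofReal (∑ ℓ ∈ s, ‖T ℓ‖) * ∑ ℓ ∈ s, ENNReal.ofReal ‖T ℓ‖ * ENNReal.ofReal (c ℓ) :=
    fun c hc => by
      rw [ENNReal.ofReal_mul (by positivity),
        ENNReal.ofReal_sum_of_nonneg fun ℓ hℓ => mul_nonneg (norm_nonneg _) (hc ℓ hℓ)]
      exact congrArg _ (Finset.sum_congr rfl fun ℓ _ => ENNReal.ofReal_mul (norm_nonneg _))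
  calc _ ≤ ∫⁻ ω, ENNReal.ofReal (∑ ℓ ∈ s, ‖T ℓ‖) *
          ∑ ℓ ∈ s, ENNReal.ofReal ‖T ℓ‖ * ENNReal.ofReal (‖Y ℓ ω‖ ^ 2) ∂μ :=
        lintegral_mono fun ω => (ENNReal.ofReal_le_ofReal (norm_sum_apply_sq_le s T _)).trans_eq
          (hsplit _ fun ℓ _ => by positivity)
    _ = ENNReal.ofReal (∑ ℓ ∈ s, ‖T ℓ‖) *
          ∑ ℓ ∈ s, ENNReal.ofReal ‖T ℓ‖ * ∫⁻ ω, ENNReal.ofReal (‖Y ℓ ω‖ ^ 2) ∂μ := by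
        rw [lintegral_const_mul' _ _ ENNReal.ofReal_ne_top,
          lintegral_finsetSum' _ fun ℓ hℓ => (hY2 ℓ hℓ).const_mul _]
        simp_rw [lintegral_const_mul' _ _ ENNReal.ofReal_ne_top]
    _ ≤ _ := by
        rw [hsplit M hM₀]
        gcongr with ℓ hℓ
        exact hM ℓ hℓ

theorem lintegral_norm_sq_le_of_hasSum [MeasurableSpace E] [OpensMeasurableSpace E]
    [MeasurableSpace F] [BorelSpace F] [SecondCountableTopology F]
    {T : ℕ → E →L[𝕜] F} (hT : Summable fun ℓ => ‖T ℓ‖)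
    {Y : ℕ → Ω → E} (hY : ∀ ℓ, AEMeasurable (Y ℓ) μ) {M : ℝ}
    (hM : ∀ ℓ, ∫⁻ ω, ENNReal.ofReal (‖Y ℓ ω‖ ^ 2) ∂μ ≤ ENNReal.ofReal M) (hM₀ : 0 ≤ M)
    {S : Ω → F} (hS : ∀ᵐ ω ∂μ, HasSum (fun ℓ => T ℓ (Y ℓ ω)) (S ω)) :
    ∫⁻ ω, ENNReal.ofReal (‖S ω‖ ^ 2) ∂μ ≤ ENNReal.ofReal ((∑' ℓ, ‖T ℓ‖) ^ 2 * M) := by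
  let partialSum : ℕ → Ω → F := fun n ω => ∑ ℓ ∈ Finset.range n, T ℓ (Y ℓ ω)
  have hpartial : ∀ n, ∫⁻ ω, ENNReal.ofReal (‖partialSum n ω‖ ^ 2) ∂μ ≤
      ENNReal.ofReal ((∑' ℓ, ‖T ℓ‖) ^ 2 * M) := fun n => by
    refine (lintegral_norm_sum_apply_sq_le _ T (fun ℓ _ => hY ℓ) (fun ℓ _ => hM ℓ)
      fun _ _ => hM₀).trans (ENNReal.ofReal_le_ofReal ?_)
    rw [← Finset.sum_mul, ← mul_assoc, ← sq]
    gcongr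
    exact hT.sum_le_tsum _ fun ℓ _ => norm_nonneg _
  have hmeas : ∀ n, AEMeasurable (fun ω => ENNReal.ofReal (‖partialSum n ω‖ ^ 2)) μ := fun n =>
    ((Finset.aemeasurable_fun_sum _ fun ℓ _ =>
      (T ℓ).continuous.measurable.comp_aemeasurable (hY ℓ)).norm.pow_const 2).ennreal_ofReal
  calc ∫⁻ ω, ENNReal.ofReal (‖S ω‖ ^ 2) ∂μ
      = ∫⁻ ω, liminf (fun n => ENNReal.ofReal (‖partialSum n ω‖ ^ 2)) atTop ∂μ :=
        lintegral_congr_ae <| hS.mono fun ω hω =>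
          ((ENNReal.continuous_ofReal.tendsto _).comp
            (hω.tendsto_sum_nat.norm.pow 2)).liminf_eq.symm
    _ ≤ liminf (fun n => ∫⁻ ω, ENNReal.ofReal (‖partialSum n ω‖ ^ 2) ∂μ) atTop :=
        lintegral_liminf_le' hmeas
    _ ≤ _ := liminf_le_of_frequently_le' (Frequently.of_forall hpartial)

theorem lintegral_norm_add_sq_le {f g : Ω → E} (hf : AEStronglyMeasurable f μ) :
    ∫⁻ ω, ENNReal.ofReal (‖f ω + g ω‖ ^ 2) ∂μ ≤
      2 * ∫⁻ ω, ENNReal.ofReal (‖f ω‖ ^ 2) ∂μ + 2 * ∫⁻ ω, ENNReal.ofReal (‖g ω‖ ^ 2) ∂μ := by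
  calc _ ≤ ∫⁻ ω, 2 * ENNReal.ofReal (‖f ω‖ ^ 2) + 2 * ENNReal.ofReal (‖g ω‖ ^ 2) ∂μ := by
        refine lintegral_mono fun ω => ?_
        have h := (pow_le_pow_left₀ (norm_nonneg _) (norm_add_le (f ω) (g ω)) 2).trans
          (add_sq_le (a := ‖f ω‖) (b := ‖g ω‖))
        refine (ENNReal.ofReal_le_ofReal h).trans_eq ?_
        rw [ENNReal.ofReal_mul zero_le_two, ENNReal.ofReal_add (by positivity) (by positivity),
          ENNReal.ofReal_ofNat, mul_add]
    _ = _ := by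
        rw [lintegral_add_left' ((hf.norm.aemeasurable.pow_const 2).ennreal_ofReal.const_mul _),
          lintegral_const_mul' _ _ ENNReal.ofNat_ne_top,
          lintegral_const_mul' _ _ ENNReal.ofNat_ne_top]

theorem integral_norm_add_sq_le {f g : Ω → E} (hf : AEStronglyMeasurable f μ)
    (hg : AEStronglyMeasurable g μ) {a b : ℝ} (ha : 0 ≤ a) (hb : 0 ≤ b)
    (hfa : ∫⁻ ω, ENNReal.ofReal (‖f ω‖ ^ 2) ∂μ ≤ ENNReal.ofReal a)
    (hgb : ∫⁻ ω, ENNReal.ofReal (‖g ω‖ ^ 2) ∂μ ≤ ENNReal.ofReal b) :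
    ∫ ω, ‖f ω + g ω‖ ^ 2 ∂μ ≤ 2 * a + 2 * b := by
  refine (integral_eq_lintegral_of_nonneg_ae (ae_of_all _ fun ω => sq_nonneg _)
    ((hf.add hg).norm.pow 2)).trans_le (ENNReal.toReal_le_of_le_ofReal (by positivity) ?_)
  refine (lintegral_norm_add_sq_le hf).trans ?_
  rw [ENNReal.ofReal_add (by positivity) (by positivity), ENNReal.ofReal_mul zero_le_two,
    ENNReal.ofReal_mul zero_le_two, ENNReal.ofReal_ofNat]
  gcongr

end SecondMoments

section Covariance

variable {H : Type*} [NormedAddCommGroup H] [InnerProductSpace ℝ H] [CompleteSpace H]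
  {Ω : Type*} [MeasurableSpace Ω] {μ : Measure Ω} {X : Ω → H}

theorem integral_inner_sq_eq_of_covariance_eigen (hX : MemLp X 2 μ) {v : H} (hv : ‖v‖ = 1)
    {c : ℝ} (hcov : ∫ ω, ⟪X ω, v⟫_ℝ • X ω ∂μ = c • v) :
    ∫ ω, ⟪v, X ω⟫_ℝ ^ 2 ∂μ = c := by
  have hint : Integrable (fun ω => ⟪X ω, v⟫_ℝ • X ω) μ :=
    memLp_one_iff_integrable.mp (hX.smul (hX.inner_const v) (p := 2) (q := 2))
  calc ∫ ω, ⟪v, X ω⟫_ℝ ^ 2 ∂μ = ∫ ω, ⟪v, ⟪X ω, v⟫_ℝ • X ω⟫_ℝ ∂μ := by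
        simp only [real_inner_smul_right, real_inner_comm v, sq]
    _ = c := by
        rw [integral_inner hint, hcov, real_inner_smul_right, real_inner_self_eq_norm_sq, hv]
        ring

variable {ν : ℕ → H} {Λ : ℕ → ℝ}

theorem eigenvalue_nonneg (hX : MemLp X 2 μ) (hν : Orthonormal ℝ ν)
    (hcov : ∀ i, ∫ ω, ⟪X ω, ν i⟫_ℝ • X ω ∂μ = Λ i • ν i) (i : ℕ) :
    0 ≤ Λ i := by
  rw [← integral_inner_sq_eq_of_covariance_eigen hX (hν.1 i) (hcov i)]
  exact integral_nonneg fun ω => sq_nonneg _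

theorem lintegral_norm_sub_projSpan_sq_eq_tsum (hX : MemLp X 2 μ) (hν : Orthonormal ℝ ν)
    (hcomp : (Submodule.span ℝ (Set.range ν)).topologicalClosure = ⊤)
    (hcov : ∀ i, ∫ ω, ⟪X ω, ν i⟫_ℝ • X ω ∂μ = Λ i • ν i) (D : ℕ) :
    ∫⁻ ω, ENNReal.ofReal (‖X ω - projSpan ν D (X ω)‖ ^ 2) ∂μ =
      ∑' i, ENNReal.ofReal (Λ (D + i)) := by
  have hcoord : ∀ i, MemLp (fun ω => ⟪ν i, X ω⟫_ℝ) 2 μ := fun i => hX.const_inner (ν i)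
  have hparseval : ∀ x : H, ENNReal.ofReal (‖x - projSpan ν D x‖ ^ 2) =
      ∑' i, ENNReal.ofReal (⟪ν (D + i), x⟫_ℝ ^ 2) := fun x => by
    have h := hasSum_inner_sq_norm_sub_projSpan hν hcomp D x
    rw [← h.tsum_eq, ENNReal.ofReal_tsum_of_nonneg (fun i => sq_nonneg _) h.summable]
  simp_rw [hparseval]
  rw [lintegral_tsum fun i =>
    ((hcoord _).aestronglyMeasurable.aemeasurable.pow_const 2).ennreal_ofReal]
  refine tsum_congr fun i => ?_
  rw [← ofReal_integral_eq_lintegral_ofReal (hcoord _).integrable_sq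
    (ae_of_all _ fun ω => sq_nonneg _),
    integral_inner_sq_eq_of_covariance_eigen hX (hν.1 _) (hcov _)]

theorem summable_eigenvalue (hX : MemLp X 2 μ) (hν : Orthonormal ℝ ν)
    (hcomp : (Submodule.span ℝ (Set.range ν)).topologicalClosure = ⊤)
    (hcov : ∀ i, ∫ ω, ⟪X ω, ν i⟫_ℝ • X ω ∂μ = Λ i • ν i) :
    Summable Λ := by
  have htotal := lintegral_norm_sub_projSpan_sq_eq_tsum hX hν hcomp hcov 0
  simp only [projSpan_zero, sub_zero, zero_add] at htotal
  have hfinite : ∑' i, ENNReal.ofReal (Λ i) ≠ ⊤ :=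
    htotal ▸ hX.norm.integrable_sq.lintegral_lt_top.ne
  simpa [ENNReal.toReal_ofReal (eigenvalue_nonneg hX hν hcov _)] using
    ENNReal.summable_toReal hfinite

theorem lintegral_norm_sub_projSpan_sq (hX : MemLp X 2 μ) (hν : Orthonormal ℝ ν)
    (hcomp : (Submodule.span ℝ (Set.range ν)).topologicalClosure = ⊤)
    (hcov : ∀ i, ∫ ω, ⟪X ω, ν i⟫_ℝ • X ω ∂μ = Λ i • ν i) (D : ℕ) :
    ∫⁻ ω, ENNReal.ofReal (‖X ω - projSpan ν D (X ω)‖ ^ 2) ∂μ =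
      ENNReal.ofReal (∑' i, Λ (D + i)) := by
  rw [lintegral_norm_sub_projSpan_sq_eq_tsum hX hν hcomp hcov, ENNReal.ofReal_tsum_of_nonneg
    (fun i => eigenvalue_nonneg hX hν hcov _)
    ((summable_nat_add_iff D).mpr (summable_eigenvalue hX hν hcomp hcov) |>.congr
      fun i => by rw [add_comm])]

end Covariance

theorem innovation_residual_L2_bound_general
    {H : Type*} [NormedAddCommGroup H] [InnerProductSpace ℝ H] [CompleteSpace H]
    [SecondCountableTopology H] [MeasurableSpace H] [BorelSpace H]
    {Ω : Type*} [MeasurableSpace Ω] (μ : Measure Ω) [IsProbabilityMeasure μ]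
    (X : ℤ → Ω → H) (hXmeas : ∀ j, Measurable (X j))
    (hident : ∀ j : ℤ, Measure.map (X j) μ = Measure.map (X 0) μ)
    (hmom : MemLp (X 0) 2 μ)
    (ν : ℕ → H) (hν : Orthonormal ℝ ν)
    (hcomp : (Submodule.span ℝ (Set.range ν)).topologicalClosure = ⊤)
    (Λ : ℕ → ℝ)
    (hcov : ∀ i : ℕ, (∫ ω, ⟪X 0 ω, ν i⟫_ℝ • X 0 ω ∂μ) = Λ i • ν i)
    (π : ℕ → H →L[ℝ] H) (hπ : Summable fun ℓ : ℕ => ‖π (ℓ + 1)‖)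
    (k : ℕ) (d : ℕ → ℕ)
    (S : Ω → H) (hS2 : MemLp S 2 μ)
    (hS : ∀ᵐ ω ∂μ, HasSum (fun ℓ : ℕ => π (k + 1 + ℓ) (X (1 - ((k : ℤ) + 1 + ℓ)) ω)) (S ω)) :
    ∫ ω, ‖S ω + ∑ ℓ ∈ Finset.Icc 1 k,
          π ℓ (X (1 - (ℓ : ℤ)) ω - projSpan ν (d (k + 1 - ℓ)) (X (1 - (ℓ : ℤ)) ω))‖ ^ 2 ∂μ
      ≤ 2 * (∑' ℓ : ℕ, ‖π (k + 1 + ℓ)‖) ^ 2 * ∫ ω, ‖X 0 ω‖ ^ 2 ∂μ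
        + 2 * (∑ ℓ ∈ Finset.Icc 1 k, ‖π ℓ‖) *
            (∑ ℓ ∈ Finset.Icc 1 k, ‖π ℓ‖ * ∑' i : ℕ, Λ (d (k + 1 - ℓ) + i)) := by
  have hdist : ∀ j, IdentDistrib (X j) (X 0) μ μ := fun j =>
    ⟨(hXmeas j).aemeasurable, (hXmeas 0).aemeasurable, hident j⟩
  have hresid_meas : ∀ j D, Measurable fun ω => X j ω - projSpan ν D (X j ω) := fun j D =>
    (hXmeas j).sub ((continuous_projSpan ν D).measurable.comp (hXmeas j))
  have hmoment : ∀ j, ∫⁻ ω, ENNReal.ofReal (‖X j ω‖ ^ 2) ∂μ =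
      ENNReal.ofReal (∫ ω, ‖X 0 ω‖ ^ 2 ∂μ) := fun j =>
    ((hdist j).comp (measurable_norm.pow_const 2).ennreal_ofReal).lintegral_eq.trans
      (ofReal_integral_eq_lintegral_ofReal hmom.norm.integrable_sq
        (ae_of_all _ fun ω => sq_nonneg _)).symm
  have hresid : ∀ j D, ∫⁻ ω, ENNReal.ofReal (‖X j ω - projSpan ν D (X j ω)‖ ^ 2) ∂μ =
      ENNReal.ofReal (∑' i, Λ (D + i)) := fun j D =>
    ((hdist j).comp (((continuous_id.sub (continuous_projSpan ν D)).norm.pow 2).measurable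
      |>.ennreal_ofReal)).lintegral_eq.trans (lintegral_norm_sub_projSpan_sq hmom hν hcomp hcov D)
  have hσ : ∀ D, 0 ≤ ∑' i, Λ (D + i) := fun D =>
    tsum_nonneg fun i => eigenvalue_nonneg hmom hν hcov _
  have hπtail : Summable fun ℓ => ‖π (k + 1 + ℓ)‖ :=
    ((summable_nat_add_iff k).mpr hπ).congr fun ℓ => by congr 2; omega
  have htail := lintegral_norm_sq_le_of_hasSum hπtail (fun ℓ => (hXmeas _).aemeasurable)
    (fun ℓ => (hmoment _).le) (by positivity) hS
  have hhead := lintegral_norm_sum_apply_sq_le (Finset.Icc 1 k) π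
    (fun ℓ _ => (hresid_meas (1 - ℓ) (d (k + 1 - ℓ))).aemeasurable) (fun ℓ _ => (hresid _ _).le)
    fun ℓ _ => hσ _
  refine (integral_norm_add_sq_le hS2.1
    (Finset.measurable_fun_sum _ fun ℓ _ => (π ℓ).continuous.measurable.comp
      (hresid_meas _ _)).aestronglyMeasurable (by positivity)
    (mul_nonneg (by positivity) (Finset.sum_nonneg fun ℓ _ => mul_nonneg (norm_nonneg _) (hσ _)))
    htail hhead).trans_eq (by ring)

/-- For an identically distributed, zero-mean, square-integrable sequence
`(X_j)` whose covariance operator has eigenbasis `(ν_i)` with eigenvalues `(λ_i)`, summable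
operators `(π_ℓ)_{ℓ≥1}`, `k ≥ 1`, dimensions `d_1, …, d_k`, and `S = Σ_{ℓ>k} π_ℓ X_{1−ℓ}`
(converging a.s./in L²), one has
`E‖S + Σ_{ℓ=1}^k π_ℓ (I − P_{d_{k+1−ℓ}}) X_{1−ℓ}‖² ≤
  2 (Σ_{ℓ>k} ‖π_ℓ‖)² E‖X_0‖² + 2 (Σ_{ℓ=1}^k ‖π_ℓ‖)(Σ_{ℓ=1}^k ‖π_ℓ‖ Σ_{i>d_{k+1−ℓ}} λ_i)`. -/
theorem innovation_residual_L2_bound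
    {H : Type*} [NormedAddCommGroup H] [InnerProductSpace ℝ H] [CompleteSpace H]
    [SecondCountableTopology H] [MeasurableSpace H] [BorelSpace H]
    {Ω : Type*} [MeasurableSpace Ω] (μ : Measure Ω) [IsProbabilityMeasure μ]
    (X : ℤ → Ω → H) (hXmeas : ∀ j, Measurable (X j))
    (hident : ∀ j : ℤ, Measure.map (X j) μ = Measure.map (X 0) μ)
    (hmean : ∫ ω, X 0 ω ∂μ = 0)
    (hmom : MemLp (X 0) 2 μ)
    (ν : ℕ → H) (hν : Orthonormal ℝ ν)
    (hcomp : (Submodule.span ℝ (Set.range ν)).topologicalClosure = ⊤)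
    (Λ : ℕ → ℝ)
    (hcov : ∀ i : ℕ, (∫ ω, ⟪X 0 ω, ν i⟫_ℝ • X 0 ω ∂μ) = Λ i • ν i)
    (π : ℕ → H →L[ℝ] H) (hπ : Summable fun ℓ : ℕ => ‖π (ℓ + 1)‖)
    (k : ℕ) (hk : 1 ≤ k) (d : ℕ → ℕ)
    (S : Ω → H) (hS2 : MemLp S 2 μ)
    (hS : ∀ᵐ ω ∂μ, HasSum (fun ℓ : ℕ => π (k + 1 + ℓ) (X (1 - ((k : ℤ) + 1 + ℓ)) ω)) (S ω)) :
    ∫ ω, ‖S ω + ∑ ℓ ∈ Finset.Icc 1 k,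
          π ℓ (X (1 - (ℓ : ℤ)) ω - projSpan ν (d (k + 1 - ℓ)) (X (1 - (ℓ : ℤ)) ω))‖ ^ 2 ∂μ
      ≤ 2 * (∑' ℓ : ℕ, ‖π (k + 1 + ℓ)‖) ^ 2 * ∫ ω, ‖X 0 ω‖ ^ 2 ∂μ
        + 2 * (∑ ℓ ∈ Finset.Icc 1 k, ‖π ℓ‖) *
            (∑ ℓ ∈ Finset.Icc 1 k, ‖π ℓ‖ * ∑' i : ℕ, Λ (d (k + 1 - ℓ) + i)) :=
  innovation_residual_L2_bound_general μ X hXmeas hident hmom ν hν hcomp Λ hcov π hπ k d S hS2 hS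
end

section
/- Let (ν_i)_{i∈ℕ} and (ν̂_i)_{i∈ℕ} be two orthonormal families in H, let k ≥ 1, and let d_1 ≤ d_2 ≤ … ≤ d_k be positive integers. Define operators P_{(k)} and P̂_{(k)} on H^k acting coordinatewise: for x = (x_1, …, x_k) ∈ H^k, the i-th coordinate of P_{(k)}x is the orthogonal projection of x_i onto span(ν_1, …, ν_{d_{k+1−i}}), and the i-th coordinate of P̂_{(k)}x is the orthogonal projection of x_i onto span(ν̂_1, …, ν̂_{d_{k+1−i}}). Then for every x ∈ H^k, ‖P_{(k)} x − P̂_{(k)} x‖ ≤ 2 ‖x‖ ( Σ_{l=1}^{d_k} ‖ν̂_l − ν_l‖² )^{1/2}. -/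
open scoped InnerProductSpace

private lemma sq_le_to_le {a b : ℝ} (ha : 0 ≤ a) (hb : 0 ≤ b) (h : a ^ 2 ≤ b ^ 2) : a ≤ b := by
  calc a = Real.sqrt (a ^ 2) := (Real.sqrt_sq ha).symm
    _ ≤ Real.sqrt (b ^ 2) := Real.sqrt_le_sqrt h
    _ = b := Real.sqrt_sq hb

private lemma proj_diff_single {H : Type*} [NormedAddCommGroup H] [InnerProductSpace ℝ H]
    {ν νh : ℕ → H} (hν : Orthonormal ℝ ν) (hνh : Orthonormal ℝ νh)
    (n : ℕ) (y : H) :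
    ‖(∑ l ∈ Finset.range n, ⟪ν l, y⟫_ℝ • ν l) -
        ∑ l ∈ Finset.range n, ⟪νh l, y⟫_ℝ • νh l‖
      ≤ 2 * ‖y‖ * Real.sqrt (∑ l ∈ Finset.range n, ‖νh l - ν l‖ ^ 2) := by
  set S := Real.sqrt (∑ l ∈ Finset.range n, ‖νh l - ν l‖ ^ 2) with hS
  have hsum_nonneg : (0:ℝ) ≤ ∑ l ∈ Finset.range n, ‖νh l - ν l‖ ^ 2 :=
    Finset.sum_nonneg fun _ _ => sq_nonneg _
  have hS_nonneg : 0 ≤ S := Real.sqrt_nonneg _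
  have hSsq : S ^ 2 = ∑ l ∈ Finset.range n, ‖νh l - ν l‖ ^ 2 := Real.sq_sqrt hsum_nonneg
  have h4 : ∑ l ∈ Finset.range n, ‖ν l - νh l‖ ^ 2
      = ∑ l ∈ Finset.range n, ‖νh l - ν l‖ ^ 2 :=
    Finset.sum_congr rfl fun l _ => by rw [norm_sub_rev]
  have split :
      (∑ l ∈ Finset.range n, ⟪ν l, y⟫_ℝ • ν l) -
          ∑ l ∈ Finset.range n, ⟪νh l, y⟫_ℝ • νh l
        = (∑ l ∈ Finset.range n, ⟪ν l, y⟫_ℝ • (ν l - νh l)) +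
            ∑ l ∈ Finset.range n, ⟪ν l - νh l, y⟫_ℝ • νh l := by
    rw [← Finset.sum_sub_distrib, ← Finset.sum_add_distrib]
    refine Finset.sum_congr rfl fun l _ => ?_
    simp only [smul_sub, inner_sub_left, sub_smul]
    abel
  -- Bound the first sum
  have hA : ‖∑ l ∈ Finset.range n, ⟪ν l, y⟫_ℝ • (ν l - νh l)‖ ≤ ‖y‖ * S := by
    have h1 : ‖∑ l ∈ Finset.range n, ⟪ν l, y⟫_ℝ • (ν l - νh l)‖
        ≤ ∑ l ∈ Finset.range n, |⟪ν l, y⟫_ℝ| * ‖ν l - νh l‖ := by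
      refine (norm_sum_le _ _).trans_eq ?_
      exact Finset.sum_congr rfl fun l _ => by rw [norm_smul, Real.norm_eq_abs]
    refine h1.trans ?_
    have hnn : (0:ℝ) ≤ ∑ l ∈ Finset.range n, |⟪ν l, y⟫_ℝ| * ‖ν l - νh l‖ :=
      Finset.sum_nonneg fun l _ => mul_nonneg (abs_nonneg _) (norm_nonneg _)
    refine sq_le_to_le hnn (mul_nonneg (norm_nonneg _) hS_nonneg) ?_
    have h3 : ∑ l ∈ Finset.range n, |⟪ν l, y⟫_ℝ| ^ 2 ≤ ‖y‖ ^ 2 := by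
      simpa [Real.norm_eq_abs] using hν.sum_inner_products_le (s := Finset.range n) y
    calc (∑ l ∈ Finset.range n, |⟪ν l, y⟫_ℝ| * ‖ν l - νh l‖) ^ 2
        ≤ (∑ l ∈ Finset.range n, |⟪ν l, y⟫_ℝ| ^ 2) *
            ∑ l ∈ Finset.range n, ‖ν l - νh l‖ ^ 2 :=
          Finset.sum_mul_sq_le_sq_mul_sq _ _ _
      _ ≤ ‖y‖ ^ 2 * S ^ 2 := by
          rw [h4, hSsq]; exact mul_le_mul_of_nonneg_right h3 hsum_nonneg
      _ = (‖y‖ * S) ^ 2 := by ring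
  -- Bound the second sum
  have hB : ‖∑ l ∈ Finset.range n, ⟪ν l - νh l, y⟫_ℝ • νh l‖ ≤ ‖y‖ * S := by
    refine sq_le_to_le (norm_nonneg _) (mul_nonneg (norm_nonneg _) hS_nonneg) ?_
    have hnormsq : ‖∑ l ∈ Finset.range n, ⟪ν l - νh l, y⟫_ℝ • νh l‖ ^ 2
        = ∑ l ∈ Finset.range n, ⟪ν l - νh l, y⟫_ℝ ^ 2 := by
      rw [← real_inner_self_eq_norm_sq,
        hνh.inner_sum (fun l => ⟪ν l - νh l, y⟫_ℝ) (fun l => ⟪ν l - νh l, y⟫_ℝ)]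
      exact Finset.sum_congr rfl fun l _ => by simp [sq]
    rw [hnormsq]
    calc ∑ l ∈ Finset.range n, ⟪ν l - νh l, y⟫_ℝ ^ 2
        ≤ ∑ l ∈ Finset.range n, ‖ν l - νh l‖ ^ 2 * ‖y‖ ^ 2 := by
          refine Finset.sum_le_sum fun l _ => ?_
          have := abs_real_inner_le_norm (ν l - νh l) y
          calc ⟪ν l - νh l, y⟫_ℝ ^ 2 = |⟪ν l - νh l, y⟫_ℝ| ^ 2 := (sq_abs _).symm
            _ ≤ (‖ν l - νh l‖ * ‖y‖) ^ 2 := by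
                exact pow_le_pow_left₀ (abs_nonneg _) this 2
            _ = ‖ν l - νh l‖ ^ 2 * ‖y‖ ^ 2 := by ring
      _ = (‖y‖ * S) ^ 2 := by
          rw [← Finset.sum_mul, h4, ← hSsq]; ring
  calc ‖(∑ l ∈ Finset.range n, ⟪ν l, y⟫_ℝ • ν l) -
          ∑ l ∈ Finset.range n, ⟪νh l, y⟫_ℝ • νh l‖
      = ‖(∑ l ∈ Finset.range n, ⟪ν l, y⟫_ℝ • (ν l - νh l)) +
            ∑ l ∈ Finset.range n, ⟪ν l - νh l, y⟫_ℝ • νh l‖ := by rw [split]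
    _ ≤ ‖∑ l ∈ Finset.range n, ⟪ν l, y⟫_ℝ • (ν l - νh l)‖ +
          ‖∑ l ∈ Finset.range n, ⟪ν l - νh l, y⟫_ℝ • νh l‖ := norm_add_le _ _
    _ ≤ ‖y‖ * S + ‖y‖ * S := add_le_add hA hB
    _ = 2 * ‖y‖ * S := by ring

/-- For two orthonormal families `(ν_i)`, `(ν̂_i)` in `H`, `k ≥ 1` and
nondecreasing positive dimensions `d_1 ≤ … ≤ d_k`, the diagonal projection operators
`P_{(k)}` and `P̂_{(k)}` on `H^k` (whose `i`-th coordinate projects onto the span of the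
first `d_{k+1−i}` members of the respective family) satisfy
`‖P_{(k)} x − P̂_{(k)} x‖ ≤ 2 ‖x‖ (Σ_{l=1}^{d_k} ‖ν̂_l − ν_l‖²)^{1/2}` for all `x ∈ H^k`. -/
theorem diagonal_projection_difference_bound
    {H : Type*} [NormedAddCommGroup H] [InnerProductSpace ℝ H]
    (ν νh : ℕ → H) (hν : Orthonormal ℝ ν) (hνh : Orthonormal ℝ νh)
    (k : ℕ) (hk : 0 < k) (d : Fin k → ℕ)
    (hmono : ∀ i j : Fin k, i ≤ j → d i ≤ d j) (hpos : ∀ i, 1 ≤ d i)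
    (x : PiLp 2 (fun _ : Fin k => H)) :
    ‖(WithLp.equiv 2 (∀ _ : Fin k, H)).symm
          (fun i => ∑ l ∈ Finset.range (d i.rev),
            ⟪ν l, (WithLp.equiv 2 (∀ _ : Fin k, H)) x i⟫_ℝ • ν l)
        - (WithLp.equiv 2 (∀ _ : Fin k, H)).symm
          (fun i => ∑ l ∈ Finset.range (d i.rev),
            ⟪νh l, (WithLp.equiv 2 (∀ _ : Fin k, H)) x i⟫_ℝ • νh l)‖
      ≤ 2 * ‖x‖ *
          (∑ l ∈ Finset.range (d ⟨k - 1, by omega⟩), ‖νh l - ν l‖ ^ 2) ^ ((1 : ℝ) / 2) := by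
  set D : ℕ := d ⟨k - 1, by omega⟩ with hD
  set S := Real.sqrt (∑ l ∈ Finset.range D, ‖νh l - ν l‖ ^ 2) with hSdef
  have hsum_nonneg : (0:ℝ) ≤ ∑ l ∈ Finset.range D, ‖νh l - ν l‖ ^ 2 :=
    Finset.sum_nonneg fun _ _ => sq_nonneg _
  have hS_nonneg : 0 ≤ S := Real.sqrt_nonneg _
  have hSsq : S ^ 2 = ∑ l ∈ Finset.range D, ‖νh l - ν l‖ ^ 2 := Real.sq_sqrt hsum_nonneg
  have hrpow : (∑ l ∈ Finset.range D, ‖νh l - ν l‖ ^ 2) ^ ((1 : ℝ) / 2) = S := by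
    rw [hSdef, Real.sqrt_eq_rpow]
  rw [hrpow]
  -- per-coordinate S bound
  have hSmono : ∀ i : Fin k, Real.sqrt (∑ l ∈ Finset.range (d i.rev), ‖νh l - ν l‖ ^ 2) ≤ S := by
    intro i
    refine Real.sqrt_le_sqrt ?_
    refine Finset.sum_le_sum_of_subset_of_nonneg ?_ (fun _ _ _ => sq_nonneg _)
    refine Finset.range_subset_range.mpr ?_
    refine hmono i.rev ⟨k - 1, by omega⟩ ?_
    have : (i.rev : ℕ) ≤ k - 1 := by omega
    exact this
  -- coordinatewise bound
  have hcoord : ∀ i : Fin k,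
      ‖(∑ l ∈ Finset.range (d i.rev), ⟪ν l, x i⟫_ℝ • ν l) -
          ∑ l ∈ Finset.range (d i.rev), ⟪νh l, x i⟫_ℝ • νh l‖ ≤ 2 * ‖x i‖ * S := by
    intro i
    refine (proj_diff_single hν hνh (d i.rev) (x i)).trans ?_
    exact mul_le_mul_of_nonneg_left (hSmono i) (by positivity)
  -- assemble
  set u := (WithLp.equiv 2 (∀ _ : Fin k, H)).symm
      (fun i => ∑ l ∈ Finset.range (d i.rev),
        ⟪ν l, (WithLp.equiv 2 (∀ _ : Fin k, H)) x i⟫_ℝ • ν l) with hu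
  set v := (WithLp.equiv 2 (∀ _ : Fin k, H)).symm
      (fun i => ∑ l ∈ Finset.range (d i.rev),
        ⟪νh l, (WithLp.equiv 2 (∀ _ : Fin k, H)) x i⟫_ℝ • νh l) with hv
  refine sq_le_to_le (norm_nonneg _) (by positivity) ?_
  have hnorm1 : ‖u - v‖ ^ 2 = ∑ i, ‖(u - v) i‖ ^ 2 := PiLp.norm_sq_eq_of_L2 _ _
  have hnormx : ‖x‖ ^ 2 = ∑ i, ‖x i‖ ^ 2 := PiLp.norm_sq_eq_of_L2 _ _
  rw [hnorm1]
  calc ∑ i, ‖(u - v) i‖ ^ 2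
      ≤ ∑ i, (2 * ‖x i‖ * S) ^ 2 := by
        refine Finset.sum_le_sum fun i _ => ?_
        have happ : (u - v) i = (∑ l ∈ Finset.range (d i.rev), ⟪ν l, x i⟫_ℝ • ν l) -
            ∑ l ∈ Finset.range (d i.rev), ⟪νh l, x i⟫_ℝ • νh l := rfl
        rw [happ]
        exact pow_le_pow_left₀ (norm_nonneg _) (hcoord i) 2
    _ = (2 * ‖x‖ * S) ^ 2 := by
        have : ∑ i, (2 * ‖x i‖ * S) ^ 2 = 4 * S ^ 2 * ∑ i, ‖x i‖ ^ 2 := by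
          rw [Finset.mul_sum]
          exact Finset.sum_congr rfl fun i _ => by ring
        rw [this, ← hnormx]; ring
end
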